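/- arXiv:2506.08685 — 8 statements merged into one kernel-verified Lean document; each statement's English description precedes it below -/
import Mathlib

section
/- A finite monoid M admits exactly two Grothendieck topologies (in its single-object category presentation) if and only if M is a group. -/
open CategoryTheory

section Aux

variable {M : Type} [Monoid M] [Finite M]

lemma aux_mul_eq_one_symm {a b : M} (h : a * b = 1) : b * a = 1 := by
  have hs : Function.Surjective (fun x : M => a * x) := fun x =>
    ⟨b * x, by show a * (b * x) = x; rw [← mul_assoc, h, one_mul]⟩
  have hi : Function.Injective (fun x : M => a * x) :=
    Finite.injective_iff_surjective.mpr hs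
  apply hi
  show a * (b * a) = a * 1
  rw [← mul_assoc, h, one_mul, mul_one]

lemma aux_isUnit_left {a b : M} (h : IsUnit (a * b)) : IsUnit a := by
  obtain ⟨u, hu⟩ := h
  have h1 : a * (b * ↑u⁻¹) = 1 := by
    rw [← mul_assoc, ← hu, Units.mul_inv]
  exact ⟨⟨a, b * ↑u⁻¹, h1, aux_mul_eq_one_symm h1⟩, rfl⟩

lemma aux_isUnit_right {a b : M} (h : IsUnit (a * b)) : IsUnit b := by
  obtain ⟨u, hu⟩ := h
  have h1 : (↑u⁻¹ * a) * b = 1 := by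
    rw [mul_assoc, ← hu, Units.inv_mul]
  exact ⟨⟨b, ↑u⁻¹ * a, aux_mul_eq_one_symm h1, h1⟩, rfl⟩

/-- The sieve of non-units in a finite monoid. -/
def nonUnitSieve (X : SingleObj M) : Sieve X where
  arrows _ f := ¬ IsUnit f
  downward_closed := by
    intro Y Z f hf g hgf
    rw [SingleObj.comp_as_mul] at hgf
    exact hf (aux_isUnit_left hgf)

omit [Finite M] in
lemma bot_ne_top_topology : (⊥ : GrothendieckTopology (SingleObj M)) ≠ ⊤ := by
  intro h
  have h1 : (⊥ : Sieve (SingleObj.star M)) ∈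
      (⊤ : GrothendieckTopology (SingleObj M)) (SingleObj.star M) :=
    GrothendieckTopology.top_covering
  rw [← h, GrothendieckTopology.bot_covering] at h1
  have : (⊥ : Sieve (SingleObj.star M)).arrows (𝟙 _) := by
    rw [h1]; trivial
  exact this

end Aux

/-- A finite monoid `M` admits exactly two Grothendieck topologies (in its single-object
category presentation) if and only if `M` is a group, i.e. every element is a unit. -/
theorem finite_monoid_two_topologies_iff_group
    (M : Type) [Monoid M] [Finite M] :
    Nat.card (GrothendieckTopology (SingleObj M)) = 2 ↔ ∀ m : M, IsUnit m := by
  constructor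
  · -- card = 2 → group
    intro hcard
    by_contra hng
    push_neg at hng
    obtain ⟨m₀, hm₀⟩ := hng
    -- three distinct topologies: ⊥, ⊤, dense
    have hbot_ne_top : (⊥ : GrothendieckTopology (SingleObj M)) ≠ ⊤ := bot_ne_top_topology
    have hdense_bot : (GrothendieckTopology.dense : GrothendieckTopology (SingleObj M)) ≠ ⊥ := by
      intro h
      have hmem : nonUnitSieve (SingleObj.star M) ∈
          (GrothendieckTopology.dense : GrothendieckTopology (SingleObj M))
            (SingleObj.star M) := by
        rw [GrothendieckTopology.dense_covering]
        intro Y f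
        refine ⟨Y, m₀, ?_⟩
        show ¬ IsUnit (m₀ ≫ f)
        rw [SingleObj.comp_as_mul]
        exact fun hu => hm₀ (aux_isUnit_right hu)
      rw [h, GrothendieckTopology.bot_covering] at hmem
      have : (nonUnitSieve (SingleObj.star M)).arrows (𝟙 _) := by rw [hmem]; trivial
      apply this
      rw [SingleObj.id_as_one]
      exact isUnit_one
    have hdense_top : (GrothendieckTopology.dense : GrothendieckTopology (SingleObj M)) ≠ ⊤ := by
      intro h
      have hmem : (⊥ : Sieve (SingleObj.star M)) ∈
          (GrothendieckTopology.dense : GrothendieckTopology (SingleObj M))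
            (SingleObj.star M) := by
        rw [h]; exact GrothendieckTopology.top_covering
      rw [GrothendieckTopology.dense_covering] at hmem
      obtain ⟨Z, g, hg⟩ := hmem (𝟙 _)
      exact hg
    rw [Nat.card_eq_two_iff] at hcard
    obtain ⟨x, y, hxy, huniv⟩ := hcard
    have hall : ∀ J : GrothendieckTopology (SingleObj M), J = x ∨ J = y := by
      intro J
      have : J ∈ ({x, y} : Set (GrothendieckTopology (SingleObj M))) := by
        rw [huniv]; trivial
      simpa using this
    rcases hall ⊥ with h1 | h1 <;> rcases hall ⊤ with h2 | h2 <;>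
      rcases hall GrothendieckTopology.dense with h3 | h3 <;>
      first
      | exact hbot_ne_top (h1.trans h2.symm)
      | exact hdense_bot (h3.trans h1.symm)
      | exact hdense_top (h3.trans h2.symm)
  · -- group → card = 2
    intro hG
    -- every nonempty sieve is ⊤
    have hsieve : ∀ (X : SingleObj M) (S : Sieve X), S ≠ ⊤ → S = ⊥ := by
      intro X S hS
      by_contra hSbot
      apply hS
      have : ∃ (Y : SingleObj M) (f : Y ⟶ X), S.arrows f := by
        by_contra hempty
        push_neg at hempty
        apply hSbot
        ext Y f
        exact ⟨fun h => (hempty Y f h).elim, fun h => h.elim⟩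
      obtain ⟨Y, f, hf⟩ := this
      rw [← Sieve.id_mem_iff_eq_top]
      obtain ⟨u, hu⟩ := hG f
      have := S.downward_closed (Z := Y) hf (↑u⁻¹ : M)
      rw [SingleObj.comp_as_mul] at this
      rw [SingleObj.id_as_one]
      have h1 : f * ↑u⁻¹ = (1 : M) := by rw [← hu, Units.mul_inv]
      rwa [h1] at this
    rw [Nat.card_eq_two_iff]
    refine ⟨⊥, ⊤, bot_ne_top_topology, ?_⟩
    ext J
    simp only [Set.mem_insert_iff, Set.mem_singleton_iff, Set.mem_univ, iff_true]
    by_cases h : ∀ (X : SingleObj M) (S : Sieve X), S ∈ J X → S = ⊤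
    · left
      apply GrothendieckTopology.ext
      funext X
      ext S
      rw [GrothendieckTopology.bot_covering]
      exact ⟨h X S, fun hS => hS ▸ J.top_mem X⟩
    · right
      push_neg at h
      obtain ⟨X, S, hSJ, hStop⟩ := h
      have hSbot : S = ⊥ := hsieve X S hStop
      apply GrothendieckTopology.ext
      funext Y
      ext R
      simp only [GrothendieckTopology.top_covering, iff_true]
      have hYX : Y = X := Subsingleton.elim Y X
      subst hYX
      exact J.superset_covering (by rw [hSbot]; exact bot_le) hSJ
end

section
/- For a finite monoid M which is not a group, the set N of elements of M that are not right invertible is a nonempty proper right ideal of M, and N belongs to the dense Grothendieck topology on M. -/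
/-- For a finite monoid `M` which is not a group, the set `N` of elements of `M` that are
not right invertible is a nonempty proper right ideal of `M`, and `N` belongs to the
dense Grothendieck topology on `M`: for every `m ∈ M` there is `n` with `m * n ∈ N`. -/
theorem non_right_invertible_ideal
    (M : Type) [Monoid M] [Finite M] (h : ∃ m : M, ¬ IsUnit m) :
    let N : Set M := {m : M | ¬ ∃ n : M, m * n = 1}
    N.Nonempty ∧ N ≠ Set.univ ∧ (∀ a ∈ N, ∀ b : M, a * b ∈ N) ∧
      (∀ m : M, ∃ n : M, m * n ∈ N) := by
  intro N
  -- A finite monoid is Dedekind-finite, so its right invertible elements are exactly its units.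
  have hN : N = {m | ¬ IsUnit m} := Set.ext fun _ => isUnit_iff_exists_inv.not.symm
  obtain ⟨m₀, hm₀⟩ := h
  rw [hN]
  refine ⟨⟨m₀, hm₀⟩, Set.ne_univ_iff_exists_notMem _ |>.mpr ⟨1, not_not.mpr isUnit_one⟩,
    fun a ha b hab => ha (isUnit_of_mul_isUnit_left hab),
    fun m => ⟨m₀, fun hu => hm₀ (isUnit_of_mul_isUnit_right hu)⟩⟩
end

section
/- Let C be a noetherian EI category (a directed category where the relation x ≤ y iff Hom(x,y) ≠ ∅ is a partial order satisfying the ascending chain condition, and every endomorphism is an isomorphism) and J a Grothendieck topology on C^op. Then J is closed under arbitrary intersections: for every object x, the intersection of all sieves S ∈ J(x) is again in J(x). -/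
open CategoryTheory

/-- Let `C` be a noetherian EI directed category and `J` a Grothendieck topology on
`C^op`.  We work in the convention where the Lean category `C` is the opposite of the
category of the paper, so that Mathlib's sieves correspond to the paper's sieves on
`C^op`.  Directedness says that the relation `x ≤ y iff Hom(x,y) ≠ ∅` (in the paper's
category) is a partial order, i.e. antisymmetric; the noetherian condition says there
are no infinite strictly ascending chains in the paper's category (which, with Lean's
arrows reversed, is the well-foundedness hypothesis below); EI means every endomorphism
is an isomorphism.  Then `J` is closed under arbitrary intersections: for every object
`x`, the intersection of all covering sieves of `x` is again a covering sieve. -/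
theorem noetherian_EI_topology_closed_under_sInf
    {C : Type u} [SmallCategory C]
    (hdir : ∀ x y : C, Nonempty (x ⟶ y) → Nonempty (y ⟶ x) → x = y)
    (hnoeth : WellFounded (fun a b : C => Nonempty (a ⟶ b) ∧ a ≠ b))
    (hEI : ∀ (x : C) (f : x ⟶ x), IsIso f)
    (J : GrothendieckTopology C) (x : C) :
    sInf (J.sieves x) ∈ J.sieves x := by
  induction x using WellFounded.induction hnoeth with
  | _ x ih =>
  by_cases h : ∀ R ∈ J.sieves x, R = (⊤ : Sieve x)
  · have : sInf (J.sieves x) = (⊤ : Sieve x) := by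
      apply top_unique
      apply le_sInf
      intro R hR
      rw [h R hR]
    rw [this]
    exact J.top_mem x
  · push_neg at h
    obtain ⟨R₀, hR₀, hR₀top⟩ := h
    apply J.transitive hR₀
    intro y f hf
    have hy : y ≠ x := by
      rintro rfl
      apply hR₀top
      rw [← Sieve.id_mem_iff_eq_top]
      have := R₀.downward_closed hf (inv f)
      simpa using this
    have key : sInf (J.sieves y) ≤ (sInf (J.sieves x)).pullback f := by
      intro z g hg
      rw [Sieve.pullback_apply, Sieve.sInf_apply]
      intro S hS
      have : S.pullback f ∈ J.sieves y := J.pullback_stable f hS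
      have := (Sieve.sInf_apply g).mp hg _ this
      rwa [Sieve.pullback_apply] at this
    exact J.superset_covering key (ih y ⟨⟨f⟩, hy⟩)
end

section
/- Let C be a directed category, J a Grothendieck topology on C^op, and D an ideal of C (an upward-closed full subcategory). Then the restriction J_D, defined by J_D(x) = {S ∩ D(x,−) : S ∈ J(x)} for x in D, is a Grothendieck topology on D^op. Moreover every Grothendieck topology on D^op arises as such a restriction. -/
open CategoryTheory

/-!
Since `D` is an ideal, every arrow into an object of `D` lies in `D`, so pushing the trace of a
sieve forward along the inclusion gives the sieve back. Hence the traces of `J`-covers are exactly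
the sieves whose image is a `J`-cover, i.e. the covers of the topology restricted along the
inclusion. Conversely, `K` is the trace of the finest topology on `C` for which the fully faithful
inclusion is cocontinuous: a sieve covers when all its pullbacks to objects of `D` have
`K`-covering trace.
-/

namespace CategoryTheory

namespace Functor

variable {C D : Type*} [Category* C] [Category* D] (G : C ⥤ D) (K : GrothendieckTopology C)

/-- The finest topology on `D` for which `G` is cocontinuous. -/
def cocontinuousTopology : GrothendieckTopology D where
  sieves x := {S | ∀ ⦃Y : C⦄ (f : G.obj Y ⟶ x), (S.pullback f).functorPullback G ∈ K Y}
  top_mem' x Y f := by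
    simp only [Sieve.pullback_top, Sieve.functorPullback_top, GrothendieckTopology.top_mem]
  pullback_stable' x y S f hS Y g := by
    rw [← Sieve.pullback_comp]
    exact hS (g ≫ f)
  transitive' x S hS R hR Y f := by
    refine K.transitive (hS f) _ fun Z g hg => ?_
    rw [← Sieve.functorPullback_pullback, ← Sieve.pullback_comp]
    simpa only [Sieve.pullback_id] using hR hg (𝟙 (G.obj Z))

instance : G.IsCocontinuous K (G.cocontinuousTopology K) where
  cover_lift {X} S hS := by simpa only [Sieve.pullback_id] using hS (𝟙 (G.obj X))

variable [G.Full] [G.Faithful]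

lemma functorPushforward_mem_cocontinuousTopology {X : C} {T : Sieve X} (hT : T ∈ K X) :
    T.functorPushforward G ∈ G.cocontinuousTopology K (G.obj X) := by
  intro Y f
  rw [← G.map_preimage f, Sieve.functorPullback_pullback,
    Sieve.functorPullback_functorPushforward_eq G]
  exact K.pullback_stable _ hT

lemma mem_iff_exists_mem_cocontinuousTopology {X : C} (T : Sieve X) :
    T ∈ K X ↔ ∃ S ∈ G.cocontinuousTopology K (G.obj X), T = S.functorPullback G := by
  refine ⟨fun hT => ⟨_, G.functorPushforward_mem_cocontinuousTopology K hT, ?_⟩, ?_⟩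
  · exact (Sieve.functorPullback_functorPushforward_eq G).symm
  · rintro ⟨S, hS, rfl⟩
    exact G.cover_lift K _ hS

end Functor

namespace ObjectProperty

variable {C : Type*} [Category* C] {P : ObjectProperty C}

lemma functorPushforward_functorPullback_ι (hP : ∀ {x y : C}, P x → (y ⟶ x) → P y)
    {X : P.FullSubcategory} (S : Sieve X.obj) :
    (S.functorPullback P.ι).functorPushforward P.ι = S := by
  refine le_antisymm (Sieve.functorPullback_pushforward_le P.ι S) fun y f hf => ?_
  exact ⟨⟨y, hP X.property f⟩, homMk f, 𝟙 y, hf, (Category.id_comp f).symm⟩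

lemma locallyCoverDense_ι (hP : ∀ {x y : C}, P x → (y ⟶ x) → P y) (J : GrothendieckTopology C) :
    P.ι.LocallyCoverDense J where
  functorPushforward_functorPullback_mem X T := by
    rw [functorPushforward_functorPullback_ι hP]
    exact T.property

lemma mem_restrictedTopology_ι_iff (hP : ∀ {x y : C}, P x → (y ⟶ x) → P y)
    (J : GrothendieckTopology C) {X : P.FullSubcategory} (T : Sieve X) :
    T ∈ P.ι.restrictedTopology J X ↔ ∃ S ∈ J X.obj, T = S.functorPullback P.ι := by
  have := locallyCoverDense_ι hP J
  rw [Functor.mem_restrictedTopology_iff, Functor.pushforward_cover_iff_cover_pullback]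
  exact ⟨fun ⟨S, hS⟩ => ⟨S.val, S.property, hS.symm⟩, fun ⟨S, hS, hT⟩ => ⟨⟨S, hS⟩, hT.symm⟩⟩

end ObjectProperty

end CategoryTheory

theorem restriction_to_ideal_is_topology_general
    {C : Type u} [SmallCategory C]
    (P : C → Prop)
    (hideal : ∀ {x y : C}, P x → (y ⟶ x) → P y)
    (J : GrothendieckTopology C) :
    (∃ JD : GrothendieckTopology (ObjectProperty.FullSubcategory P),
      ∀ (X : ObjectProperty.FullSubcategory P) (T : Sieve X),
        T ∈ JD X ↔ ∃ S ∈ J X.obj,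
          T = Sieve.functorPullback (ObjectProperty.ι P) S) ∧
    (∀ K : GrothendieckTopology (ObjectProperty.FullSubcategory P),
      ∃ J' : GrothendieckTopology C,
        ∀ (X : ObjectProperty.FullSubcategory P) (T : Sieve X),
          T ∈ K X ↔ ∃ S ∈ J' X.obj,
            T = Sieve.functorPullback (ObjectProperty.ι P) S) :=
  ⟨⟨_, fun _ => ObjectProperty.mem_restrictedTopology_ι_iff hideal J⟩,
    fun K => ⟨_, fun _ => (ObjectProperty.ι P).mem_iff_exists_mem_cocontinuousTopology K⟩⟩

/-- Let `C` be a directed category (Lean convention: `C` is the opposite of the paper's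
category, so Mathlib sieves correspond to the paper's sieves on `C^op`), `J` a
Grothendieck topology on it, and `D` an ideal of the paper's category, i.e. a full
subcategory, given by a predicate `P`, which is upward closed with respect to the
paper's morphisms (in Lean: if `P x` and there is a morphism `y ⟶ x`, then `P y`).
Then the restriction `J_D`, whose covering sieves on an object of `D` are exactly the
restrictions `S ∩ D(x,−)` of covering sieves `S ∈ J x`, is a Grothendieck topology on
`D`.  Moreover every Grothendieck topology on `D` arises as such a restriction. -/
theorem restriction_to_ideal_is_topology
    {C : Type u} [SmallCategory C]
    (hdir : ∀ x y : C, Nonempty (x ⟶ y) → Nonempty (y ⟶ x) → x = y)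
    (P : C → Prop)
    (hideal : ∀ {x y : C}, P x → (y ⟶ x) → P y)
    (J : GrothendieckTopology C) :
    (∃ JD : GrothendieckTopology (ObjectProperty.FullSubcategory P),
      ∀ (X : ObjectProperty.FullSubcategory P) (T : Sieve X),
        T ∈ JD X ↔ ∃ S ∈ J X.obj,
          T = Sieve.functorPullback (ObjectProperty.ι P) S) ∧
    (∀ K : GrothendieckTopology (ObjectProperty.FullSubcategory P),
      ∃ J' : GrothendieckTopology C,
        ∀ (X : ObjectProperty.FullSubcategory P) (T : Sieve X),
          T ∈ K X ↔ ∃ S ∈ J' X.obj,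
            T = Sieve.functorPullback (ObjectProperty.ι P) S) :=
  restriction_to_ideal_is_topology_general P hideal J
end

section
/- Let C be a directed category, E a coideal of C (a downward-closed full subcategory), D the complementary ideal, K the maximal topology on D^op, and L a Grothendieck topology on E^op. Define J(x) = K(x) for x in D and J(x) = {sieves S on x in C^op with S ∩ E(x,−) ∈ L(x)} for x in E. Then J is a Grothendieck topology on C^op. -/
open CategoryTheory

namespace CategoryTheory.GrothendieckTopology

variable {C : Type u} [Category.{v} C] (Q : ObjectProperty C)

/-- Off `Q` every sieve covers (the condition `∀ hx : Q x` is vacuous); closure of `Q` under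
outgoing morphisms is what makes this pullback stable. -/
def extendByTop (hQ : ∀ {x y : C}, Q x → (x ⟶ y) → Q y)
    (L : GrothendieckTopology Q.FullSubcategory) : GrothendieckTopology C where
  sieves x := {S | ∀ hx : Q x, S.functorPullback Q.ι (X := ⟨x, hx⟩) ∈ L ⟨x, hx⟩}
  top_mem' x hx := by
    rw [Sieve.functorPullback_top]
    exact L.top_mem _
  pullback_stable' x y S f hS hy := by
    have hx : Q x := hQ hy f
    exact Sieve.functorPullback_pullback Q.ι (X := ⟨y, hy⟩) (Y := ⟨x, hx⟩)
      (ObjectProperty.homMk f) S ▸ L.pullback_stable _ (hS hx)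
  transitive' x S hS R hR hx := by
    refine L.transitive (hS hx) _ fun y f hf => ?_
    rw [← Sieve.functorPullback_pullback]
    exact hR hf y.property

theorem mem_extendByTop {hQ : ∀ {x y : C}, Q x → (x ⟶ y) → Q y}
    {L : GrothendieckTopology Q.FullSubcategory} {x : C} {S : Sieve x} :
    S ∈ extendByTop Q hQ L x ↔ ∀ hx : Q x, S.functorPullback Q.ι (X := ⟨x, hx⟩) ∈ L ⟨x, hx⟩ :=
  Iff.rfl

end CategoryTheory.GrothendieckTopology

theorem coideal_glued_topology_general
    {C : Type u} [SmallCategory C]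
    (Q : C → Prop)
    (hcoideal : ∀ {x y : C}, Q x → (x ⟶ y) → Q y)
    (L : GrothendieckTopology (ObjectProperty.FullSubcategory Q)) :
    ∃ J : GrothendieckTopology C, ∀ (x : C) (S : Sieve x),
      S ∈ J x ↔ ∀ hx : Q x,
        Sieve.functorPullback (ObjectProperty.ι Q)
          (X := ⟨x, hx⟩) S ∈ L ⟨x, hx⟩ :=
  ⟨GrothendieckTopology.extendByTop Q hcoideal L, fun _ _ => GrothendieckTopology.mem_extendByTop Q⟩

/-- Let `C` be a directed category (Lean convention: `C` is the opposite of the paper's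
category, so Mathlib sieves correspond to the paper's sieves on `C^op`), `E` a coideal
of the paper's category given by a predicate `Q` (downward closed in the paper, i.e. in
Lean: `Q x` and `x ⟶ y` imply `Q y`), `D` the complementary ideal, `K` the maximal
topology on `D`, and `L` a Grothendieck topology on `E`.  Define `J x = K x` (all
sieves) for `x ∈ D` and, for `x ∈ E`, `J x` consisting of the sieves `S` on `x` whose
restriction `S ∩ E(x,−)` lies in `L x`.  Then `J` is a Grothendieck topology on `C`;
i.e. there is a Grothendieck topology whose covering sieves are exactly as described. -/
theorem coideal_glued_topology
    {C : Type u} [SmallCategory C]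
    (hdir : ∀ x y : C, Nonempty (x ⟶ y) → Nonempty (y ⟶ x) → x = y)
    (Q : C → Prop)
    (hcoideal : ∀ {x y : C}, Q x → (x ⟶ y) → Q y)
    (L : GrothendieckTopology (ObjectProperty.FullSubcategory Q)) :
    ∃ J : GrothendieckTopology C, ∀ (x : C) (S : Sieve x),
      S ∈ J x ↔ ∀ hx : Q x,
        Sieve.functorPullback (ObjectProperty.ι Q)
          (X := ⟨x, hx⟩) S ∈ L ⟨x, hx⟩ :=
  coideal_glued_topology_general Q hcoideal L
end

section
/- Let C be a noetherian EI category and assign to each object x a sieve S_x ⊆ C(x,−) forming a consistent family: for each x, either S_x = C(x,−) or S_x equals the union over all objects y ≠ x and morphisms f ∈ C(x,y) of S_y∘f. Then the rule J(x) = {sieves S : S ⊇ S_x} is a Grothendieck topology on C^op, and every Grothendieck topology on C^op arises from a unique consistent family in this way. -/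
open CategoryTheory

/-- A family of sieves `S x` on the objects of `C` is consistent if for each `x` either
`S x` is the maximal sieve or `S x` is the union, over all objects `y ≠ x` and morphisms
`f ∈ C(x,y)` (in the paper's category, i.e. `f : y ⟶ x` in Lean), of `S y ∘ f`. -/
def ConsistentFamily {C : Type u} [SmallCategory C] (S : ∀ x : C, Sieve x) : Prop :=
  ∀ x : C, S x = ⊤ ∨
    ∀ ⦃z : C⦄ (h : z ⟶ x), (S x).arrows h ↔
      ∃ y : C, y ≠ x ∧ ∃ (f : y ⟶ x) (g : z ⟶ y), (S y).arrows g ∧ h = g ≫ f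

namespace ConsistentFamilyAux

variable {C : Type u} [SmallCategory C]

/-- The "union sieve" `⋃_{y ≠ x, f : y ⟶ x} S y ≫ f`. -/
def USieve (S : ∀ x : C, Sieve x) (x : C) : Sieve x where
  arrows z h := ∃ y : C, y ≠ x ∧ ∃ (f : y ⟶ x) (g : z ⟶ y), (S y).arrows g ∧ h = g ≫ f
  downward_closed := by
    rintro z w h ⟨y, hy, f, g, hg, rfl⟩ e
    exact ⟨y, hy, f, e ≫ g, (S y).downward_closed hg e, (Category.assoc _ _ _).symm⟩

lemma comp_mem {S : ∀ x : C, Sieve x} (hS : ConsistentFamily S)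
    {x y z : C} (f : y ⟶ x) (g : z ⟶ y) (hg : (S y).arrows g) :
    (S x).arrows (g ≫ f) := by
  rcases hS x with h | h
  · rw [h]; trivial
  · refine (h _).mpr ?_
    by_cases hyx : y = x
    · subst hyx
      obtain ⟨w, hw, f', g', hg', rfl⟩ := (h _).mp hg
      exact ⟨w, hw, f' ≫ f, g', hg', Category.assoc _ _ _⟩
    · exact ⟨y, hyx, f, g, hg, rfl⟩

lemma trans_le {S : ∀ x : C, Sieve x} (hS : ConsistentFamily S)
    (hnoeth : WellFounded (fun a b : C => Nonempty (a ⟶ b) ∧ a ≠ b)) :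
    ∀ x : C, ∀ R T : Sieve x, S x ≤ R →
      (∀ ⦃y : C⦄ (f : y ⟶ x), R.arrows f → S y ≤ T.pullback f) → S x ≤ T := by
  intro x
  induction x using hnoeth.induction with
  | _ x IH =>
    intro R T hR hT z h hh
    rcases hS x with hx | hx
    · have h1 : (S x).arrows (𝟙 x) := by rw [hx]; trivial
      have h2 := hT (𝟙 x) (hR _ h1) _ hh
      simpa using h2
    · obtain ⟨y, hy, f, g, hg, rfl⟩ := (hx h).mp hh
      have hrel : Nonempty (y ⟶ x) ∧ y ≠ x := ⟨⟨f⟩, hy⟩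
      have key : S y ≤ T.pullback f := by
        refine IH y hrel (R.pullback f) (T.pullback f) ?_ ?_
        · intro w g' hg'
          exact hR _ (comp_mem hS f g' hg')
        · intro w f' hf'
          intro v g' hg'
          have := hT (f' ≫ f) hf' _ hg'
          simpa using this
      exact key _ hg

lemma all_top (hEI : ∀ (x : C) (f : x ⟶ x), IsIso f)
    (J : GrothendieckTopology C) (S : ∀ x : C, Sieve x) (x : C)
    (hU : USieve S x ∉ J x)
    (hIH : ∀ z : C, (Nonempty (z ⟶ x) ∧ z ≠ x) → S z ∈ J z) :
    ∀ T ∈ J x, T = ⊤ := by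
  intro T hT
  by_contra hne
  apply hU
  apply J.transitive hT
  intro z h hh
  have hzx : z ≠ x := by
    rintro rfl
    have : IsIso h := hEI z h
    refine hne (Sieve.id_mem_iff_eq_top.mp ?_)
    have := T.downward_closed hh (inv h)
    simpa using this
  exact J.superset_covering (fun w g hg => ⟨z, hzx, h, g, hg, rfl⟩) (hIH z ⟨⟨h⟩, hzx⟩)

end ConsistentFamilyAux

open ConsistentFamilyAux in
/-- Let `C` be a noetherian EI directed category (Lean convention: `C` is the opposite
of the paper's category).  Every consistent family of sieves determines a Grothendieck
topology whose covering sieves on `x` are exactly those containing `S x`, and every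
Grothendieck topology arises from a unique consistent family in this way. -/
theorem consistent_families_classify_topologies
    {C : Type u} [SmallCategory C]
    (hdir : ∀ x y : C, Nonempty (x ⟶ y) → Nonempty (y ⟶ x) → x = y)
    (hnoeth : WellFounded (fun a b : C => Nonempty (a ⟶ b) ∧ a ≠ b))
    (hEI : ∀ (x : C) (f : x ⟶ x), IsIso f) :
    (∀ S : ∀ x : C, Sieve x, ConsistentFamily S →
      ∃ J : GrothendieckTopology C, ∀ (x : C) (T : Sieve x), T ∈ J x ↔ S x ≤ T) ∧
    (∀ J : GrothendieckTopology C, ∃! S : ∀ x : C, Sieve x,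
      ConsistentFamily S ∧ ∀ (x : C) (T : Sieve x), T ∈ J x ↔ S x ≤ T) := by
  constructor
  · -- every consistent family gives a topology
    intro S hS
    refine ⟨⟨fun x => {T | S x ≤ T}, fun x => (le_top : S x ≤ ⊤), ?_, ?_⟩, fun x T => Iff.rfl⟩
    · intro x y T f hT z g hg
      exact hT _ (comp_mem hS f g hg)
    · intro x R hR T hT
      exact trans_le hS hnoeth x R T hR (fun y f hf => hT hf)
  · -- every topology comes from a unique consistent family
    intro J
    set S : ∀ x : C, Sieve x := fun x => sInf {T : Sieve x | T ∈ J x} with hSdef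
    -- the union sieve is below every covering sieve
    have hUle : ∀ (x : C) (T : Sieve x), T ∈ J x → USieve S x ≤ T := by
      rintro x T hT z h ⟨y, hy, f, g, hg, rfl⟩
      exact sInf_le (J.pullback_stable f hT) _ hg
    -- the minimal sieve is covering
    have hmem : ∀ x : C, S x ∈ J x := by
      intro x
      induction x using hnoeth.induction with
      | _ x IH =>
        by_cases hU : USieve S x ∈ J x
        · have heq : S x = USieve S x :=
            le_antisymm (sInf_le hU) (le_sInf fun T hT => hUle x T hT)
          rw [heq]; exact hU
        · have hall := all_top hEI J S x hU IH
          have heq : S x = ⊤ :=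
            le_antisymm le_top (le_sInf fun T hT => (hall T hT) ▸ le_rfl)
          rw [heq]; exact J.top_mem x
    have hiff : ∀ (x : C) (T : Sieve x), T ∈ J x ↔ S x ≤ T := by
      intro x T
      exact ⟨fun hT => sInf_le hT, fun h => J.superset_covering h (hmem x)⟩
    have hcons : ConsistentFamily S := by
      intro x
      by_cases hU : USieve S x ∈ J x
      · right
        have heq : S x = USieve S x :=
          le_antisymm (sInf_le hU) (le_sInf fun T hT => hUle x T hT)
        intro z h
        rw [heq]
        exact Iff.rfl
      · left
        have hall := all_top hEI J S x hU (fun z _ => hmem z)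
        exact le_antisymm le_top (le_sInf fun T hT => (hall T hT) ▸ le_rfl)
    refine ⟨S, ⟨hcons, hiff⟩, ?_⟩
    rintro S' ⟨-, hiff'⟩
    funext x
    refine le_antisymm ?_ ?_
    · exact le_sInf fun T hT => (hiff' x T).mp hT
    · exact sInf_le ((hiff' x (S' x)).mpr le_rfl)
end

section
/- Let C be a noetherian EI category, J a Grothendieck topology on C^op, O a structure presheaf, and D the full subcategory of J-irreducible objects (objects x with J(x) = {C(x,−)}). Then an O-module V is J-torsion (i.e., every element of every V_x is annihilated by some covering sieve) if and only if V_x = 0 for every object x of D. -/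
/-!
An element `v ∈ M(x)` is torsion exactly when its annihilator sieve `{f | f • v = 0}` covers `x`.
At an irreducible object the only covering sieve is the maximal one, so torsion elements there
vanish. Conversely, argue by noetherian induction on `x`: if `x` is not irreducible, it has a
covering sieve `T ≠ ⊤`, and since endomorphisms are invertible every arrow `f : y ⟶ x` of `T` has
`y ≠ x`. The annihilator sieve of `v` pulls back along `f` to that of `f • v`, which covers `y` by
induction, so it covers `x` by transitivity.
-/

open CategoryTheory Opposite

universe u w

namespace CategoryTheory

theorem Sieve.eq_top_of_isIso_mem {C : Type*} [Category C] {X Y : C} {S : Sieve X}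
    (f : Y ⟶ X) [IsIso f] (hf : S f) : S = ⊤ := by
  rw [← Sieve.id_mem_iff_eq_top, ← IsIso.inv_hom_id f, Sieve.comp_mem_iff]
  exact hf

namespace GrothendieckTopology

variable {C : Type*} [Category C] (J : GrothendieckTopology C)

theorem eq_top_of_sieves_eq_singleton_top {X : C} (hX : J.sieves X = {⊤}) {S : Sieve X}
    (hS : S ∈ J X) : S = ⊤ := by
  have hS' : S ∈ J.sieves X := hS
  rwa [hX, Set.mem_singleton_iff] at hS'

theorem exists_covering_of_sieves_ne_singleton_top (hEI : ∀ (X : C) (f : X ⟶ X), IsIso f)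
    {X : C} (hX : J.sieves X ≠ {⊤}) :
    ∃ T ∈ J X, ∀ ⦃Y : C⦄ (f : Y ⟶ X), T f → Y ≠ X := by
  obtain ⟨T, hT, hT_ne⟩ : ∃ T ∈ J X, T ≠ ⊤ := by
    by_contra! h
    exact hX (Set.eq_singleton_iff_unique_mem.2 ⟨J.top_mem X, h⟩)
  refine ⟨T, hT, fun Y f hf hYX => ?_⟩
  subst hYX
  have := hEI Y f
  exact hT_ne (Sieve.eq_top_of_isIso_mem f hf)

end GrothendieckTopology

end CategoryTheory

namespace PresheafOfModules

variable {C : Type*} [Category C] {R : Cᵒᵖ ⥤ RingCat.{u}} (M : PresheafOfModules.{w} R)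

def annihilatorSieve {X : C} (v : M.obj (op X)) : Sieve X where
  arrows _ f := M.map f.op v = 0
  downward_closed {_ _ f} hf g := by
    simp only [op_comp, map_comp_apply, hf]
    exact (M.map g.op).hom.map_zero

@[simp]
theorem annihilatorSieve_apply {X Y : C} (v : M.obj (op X)) (f : Y ⟶ X) :
    M.annihilatorSieve v f ↔ M.map f.op v = 0 :=
  Iff.rfl

theorem pullback_annihilatorSieve {X Y : C} (v : M.obj (op X)) (f : Y ⟶ X) :
    (M.annihilatorSieve v).pullback f = M.annihilatorSieve (X := Y) (M.map f.op v) := by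
  ext Z g
  exact iff_of_eq (congrArg (· = 0) (M.map_comp_apply f.op g.op v))

theorem annihilatorSieve_eq_top_iff {X : C} (v : M.obj (op X)) :
    M.annihilatorSieve v = ⊤ ↔ v = 0 := by
  refine ⟨fun h => ?_, fun h => ?_⟩
  · have hid := Sieve.id_mem_iff_eq_top.2 h
    simp only [annihilatorSieve_apply, op_id, map_id] at hid
    exact hid
  · ext Y f
    simp [h]

variable (J : GrothendieckTopology C)

theorem exists_covering_annihilating_iff {X : C} (v : M.obj (op X)) :
    (∃ S ∈ J X, ∀ ⦃Y : C⦄ (f : Y ⟶ X), S f → M.map f.op v = 0) ↔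
      M.annihilatorSieve v ∈ J X :=
  ⟨fun ⟨_, hS, hann⟩ => J.superset_covering hann hS, fun h => ⟨_, h, fun _ _ hf => hf⟩⟩

theorem annihilatorSieve_mem_of_vanishes_on_irreducibles
    (hnoeth : WellFounded (fun a b : C => Nonempty (a ⟶ b) ∧ a ≠ b))
    (hEI : ∀ (X : C) (f : X ⟶ X), IsIso f)
    (h : ∀ X : C, J.sieves X = {⊤} → ∀ v : M.obj (op X), v = 0) (X : C) (v : M.obj (op X)) :
    M.annihilatorSieve v ∈ J X := by
  induction X using hnoeth.induction with
  | _ X ih =>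
    by_cases hX : J.sieves X = {⊤}
    · rw [(M.annihilatorSieve_eq_top_iff v).2 (h X hX v)]
      exact J.top_mem X
    · obtain ⟨T, hT, hT_ne⟩ := J.exists_covering_of_sieves_ne_singleton_top hEI hX
      refine J.transitive hT _ fun Y f hf => ?_
      rw [pullback_annihilatorSieve]
      exact ih Y ⟨⟨f⟩, hT_ne f hf⟩ _

end PresheafOfModules

/-- The Lean category `C` is the opposite of the paper's category, so Mathlib's sieves on `C` are
the paper's sieves on `C^op` and a presheaf of modules on `C` is an `O`-module in the paper's
sense; `J`-irreducible objects are those `x` with `J x = {⊤}`. -/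
theorem torsion_iff_vanishes_on_irreducibles_general
    {C : Type u} [SmallCategory C]
    (hnoeth : WellFounded (fun a b : C => Nonempty (a ⟶ b) ∧ a ≠ b))
    (hEI : ∀ (x : C) (f : x ⟶ x), IsIso f)
    (J : GrothendieckTopology C) {R : Cᵒᵖ ⥤ RingCat.{u}}
    (M : PresheafOfModules.{u} R) :
    (∀ (x : C) (v : M.obj (op x)), ∃ S ∈ J x,
        ∀ ⦃y : C⦄ (f : y ⟶ x), S.arrows f → M.map f.op v = 0) ↔
    (∀ x : C, J.sieves x = {⊤} → ∀ v : M.obj (op x), v = 0) := by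
  simp only [M.exists_covering_annihilating_iff J]
  refine ⟨fun htors x hx v => ?_, M.annihilatorSieve_mem_of_vanishes_on_irreducibles J hnoeth hEI⟩
  exact (M.annihilatorSieve_eq_top_iff v).1 (J.eq_top_of_sieves_eq_singleton_top hx (htors x v))

/-- Let `C` be a noetherian EI directed category (Lean convention: the Lean category `C`
is the opposite of the paper's category, so Mathlib's sieves correspond to the paper's
sieves on `C^op`, and a presheaf of modules on `C` is a covariant functor on the paper's
category), `J` a Grothendieck topology, `R` a structure presheaf of rings, and `M` a
presheaf of `R`-modules.  Then `M` is `J`-torsion — every element of every `M.obj (op x)`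
is annihilated by some covering sieve — if and only if `M.obj (op x) = 0` for every
`J`-irreducible object `x`, i.e. every `x` with `J x = {⊤}`. -/
theorem torsion_iff_vanishes_on_irreducibles
    {C : Type u} [SmallCategory C]
    (hdir : ∀ x y : C, Nonempty (x ⟶ y) → Nonempty (y ⟶ x) → x = y)
    (hnoeth : WellFounded (fun a b : C => Nonempty (a ⟶ b) ∧ a ≠ b))
    (hEI : ∀ (x : C) (f : x ⟶ x), IsIso f)
    (J : GrothendieckTopology C) {R : Cᵒᵖ ⥤ RingCat.{u}}
    (M : PresheafOfModules.{u} R) :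
    (∀ (x : C) (v : M.obj (op x)), ∃ S ∈ J x,
        ∀ ⦃y : C⦄ (f : y ⟶ x), S.arrows f → M.map f.op v = 0) ↔
    (∀ x : C, J.sieves x = {⊤} → ∀ v : M.obj (op x), v = 0) :=
  torsion_iff_vanishes_on_irreducibles_general hnoeth hEI J M
end

section
/- Let C be an EI category of type ℕ, and let d: ℕ → ℕ ∪ {∞} satisfy: d(n) ≠ 0 implies d(n+1) = d(n) − 1. Then the rule J with J(n) = {S(n,r) : r ≤ d(n)}, where S(n,r) is the sieve of morphisms out of n of degree ≥ r, is a Grothendieck topology on C^op; moreover every Grothendieck topology on C^op whose values never contain the empty sieve arises from a unique such function d. -/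
/-
A sieve on `m` containing an arrow out of `k` contains every arrow out of every `k' ≥ k`:
factor `k' → m` through `k` (generation in degree one) and use that `C(k,k)` acts
transitively on `C(m,k)`. Hence the nonempty sieves are exactly the `S(m,r)`, and `S(m,r)`
pulls back along any `m → k` to `S(k, m + r - k)`. For a generic topology the degrees `r`
with `S(n,r)` covering form an initial segment of ℕ, whose supremum is the `d n` sought:
pullback stability gives `d (n+1) ≥ d n - 1`, and once `S(n,1)` covers, transitivity along
`S(n,1)` gives the reverse inequality. Conversely the recursion on `d` means
`d (n + r) = d n - r` for `r ≤ d n`, which is what pullback stability and transitivity of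
`J(n) = {S(n,r) : r ≤ d n}` amount to.
-/

open CategoryTheory

/-- The sieve `S(m,r)` of morphisms of degree `≥ r` out of `m` (Lean convention: the
category structure on ℕ is the opposite of the paper's category of type ℕ, so a Lean
morphism `n ⟶ m` is a paper morphism `m → n`, of degree `n - m`). -/
def degSieve [SmallCategory ℕ]
    (hne : ∀ m n : ℕ, Nonempty ((n : ℕ) ⟶ (m : ℕ)) ↔ m ≤ n) (m r : ℕ) :
    Sieve (m : ℕ) where
  arrows k _ := m + r ≤ k
  downward_closed := fun {k j} {_} hf g => le_trans hf ((hne k j).mp ⟨g⟩)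

section DepthRecursion

variable {d : ℕ → ℕ∞} (hd : ∀ n : ℕ, d n ≠ 0 → d (n + 1) = d n - 1)
include hd

lemma apply_add_of_le {n r : ℕ} (hr : (r : ℕ∞) ≤ d n) : d (n + r) = d n - r := by
  induction r with
  | zero => simp
  | succ r ih =>
    push_cast at hr
    have ih := ih (le_trans (by simp) hr)
    have hpos : d (n + r) ≠ 0 := by
      rw [ih, Ne, tsub_eq_zero_iff_le, not_le]
      exact ENat.natCast_add_one_le_iff.mp hr
    rw [← add_assoc, hd _ hpos, ih, tsub_tsub, Nat.cast_succ]

lemma add_tsub_le_apply_of_le {n k r : ℕ} (hnk : n ≤ k) (hr : (r : ℕ∞) ≤ d n) :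
    ((n + r - k : ℕ) : ℕ∞) ≤ d k := by
  obtain ⟨s, rfl⟩ := Nat.exists_eq_add_of_le hnk
  rw [Nat.add_sub_add_left]
  rcases le_total s r with hsr | hrs
  · rw [apply_add_of_le hd (le_trans (by exact_mod_cast hsr) hr), ENat.natCast_sub]
    exact tsub_le_tsub_right hr _
  · simp [Nat.sub_eq_zero_of_le hrs]

end DepthRecursion

section EICategory

variable [SmallCategory ℕ] (hne : ∀ m n : ℕ, Nonempty ((n : ℕ) ⟶ (m : ℕ)) ↔ m ≤ n)
    (htrans : ∀ (m n : ℕ) (f g : (n : ℕ) ⟶ (m : ℕ)), ∃ e : (n : ℕ) ⟶ (n : ℕ), e ≫ f = g)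
    (hgen : ∀ (m n : ℕ) (f : (n : ℕ) ⟶ (m : ℕ)), m < n →
      ∃ (g : (n : ℕ) ⟶ ((m + 1 : ℕ) : ℕ)) (h : ((m + 1 : ℕ) : ℕ) ⟶ (m : ℕ)), f = g ≫ h)

include hgen in
lemma exists_factorization_through {m k k' : ℕ} (hmk : m ≤ k) (hkk' : k ≤ k') (g : (k' : ℕ) ⟶ (m : ℕ)) :
    ∃ (a : (k' : ℕ) ⟶ (k : ℕ)) (b : (k : ℕ) ⟶ (m : ℕ)), g = a ≫ b := by
  induction k, hmk using Nat.le_induction with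
  | base => exact ⟨g, 𝟙 _, (Category.comp_id g).symm⟩
  | succ k _ ih =>
    obtain ⟨a, b, rfl⟩ := ih (by omega)
    obtain ⟨a', h, rfl⟩ := hgen k k' a (by omega)
    exact ⟨a', h ≫ b, by rw [Category.assoc]⟩

include hne htrans hgen in
lemma arrows_of_arrows_of_le {m k k' : ℕ} {T : Sieve (m : ℕ)} {f : (k : ℕ) ⟶ (m : ℕ)}
    (hf : T f) (hkk' : k ≤ k') (g : (k' : ℕ) ⟶ (m : ℕ)) : T g := by
  obtain ⟨a, b, rfl⟩ := exists_factorization_through hgen ((hne m k).mp ⟨f⟩) hkk' g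
  obtain ⟨e, rfl⟩ := htrans m k f b
  simpa using T.downward_closed (T.downward_closed hf e) a

include htrans hgen in
lemma eq_degSieve_of_ne_bot {m : ℕ} {T : Sieve (m : ℕ)} (hT : T ≠ ⊥) : ∃ r : ℕ, T = degSieve hne m r := by
  classical
  have hex : ∃ k : ℕ, ∃ f : (k : ℕ) ⟶ (m : ℕ), T f := by
    by_contra! h
    exact hT (Sieve.ext fun k f => iff_false_intro (h k f))
  obtain ⟨f₀, hf₀⟩ := Nat.find_spec hex
  refine ⟨Nat.find hex - m, Sieve.ext fun k f => ?_⟩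
  have hm₀ : m ≤ Nat.find hex := (hne m _).mp ⟨f₀⟩
  change T f ↔ m + (Nat.find hex - m) ≤ k
  rw [Nat.add_sub_cancel' hm₀]
  exact ⟨fun hf => Nat.find_min' hex ⟨f, hf⟩,
    fun hk => arrows_of_arrows_of_le hne htrans hgen hf₀ hk f⟩

lemma degSieve_injective (m : ℕ) : Function.Injective (degSieve hne m) := by
  intro r r' h
  have key : ∀ {s s'}, degSieve hne m s = degSieve hne m s' → s' ≤ s := fun {s s'} h => by
    obtain ⟨f⟩ := (hne m (m + s)).mpr (by omega)
    have hf : degSieve hne m s' f := h ▸ (le_refl (m + s) : degSieve hne m s f)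
    change m + s' ≤ m + s at hf
    omega
  exact le_antisymm (key h.symm) (key h)

lemma degSieve_antitone (m : ℕ) : Antitone (degSieve hne m) :=
  fun _ _ h _ _ hf => le_trans (by simpa using h) hf

lemma degSieve_ne_bot (m r : ℕ) : degSieve hne m r ≠ ⊥ := by
  obtain ⟨f⟩ := (hne m (m + r)).mpr (by omega)
  exact fun h => (h ▸ (le_refl (m + r) : degSieve hne m r f) : (⊥ : Sieve _) f)

lemma degSieve_zero (m : ℕ) : degSieve hne m 0 = ⊤ :=
  Sieve.ext fun k f => iff_true_intro ((hne m k).mp ⟨f⟩)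

lemma pullback_degSieve {m k : ℕ} (f : (k : ℕ) ⟶ (m : ℕ)) (r : ℕ) :
    (degSieve hne m r).pullback f = degSieve hne k (m + r - k) := by
  have hmk := (hne m k).mp ⟨f⟩
  refine Sieve.ext fun j g => ?_
  have hkj := (hne k j).mp ⟨g⟩
  change m + r ≤ j ↔ k + (m + r - k) ≤ j
  omega

def degTopology {d : ℕ → ℕ∞} (hd : ∀ n : ℕ, d n ≠ 0 → d (n + 1) = d n - 1) :
    GrothendieckTopology ℕ where
  sieves n := {T | ∃ r : ℕ, (r : ℕ∞) ≤ d n ∧ T = degSieve hne n r}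
  top_mem' n := ⟨0, zero_le, (degSieve_zero hne n).symm⟩
  pullback_stable' := by
    rintro m k _ f ⟨r, hr, rfl⟩
    exact ⟨m + r - k, add_tsub_le_apply_of_le hd ((hne m k).mp ⟨f⟩) hr, pullback_degSieve hne f r⟩
  transitive' := by
    rintro m _ ⟨r, hr, rfl⟩ R hR
    obtain ⟨f⟩ := (hne m (m + r)).mpr (by omega)
    obtain ⟨s, hs, hRf⟩ := hR (le_refl (m + r) : degSieve hne m r f)
    have hR_ne_bot : R ≠ ⊥ := by
      rintro rfl
      exact degSieve_ne_bot hne _ s (hRf.symm.trans (Sieve.pullback_bot f))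
    obtain ⟨q, rfl⟩ := eq_degSieve_of_ne_bot hne htrans hgen hR_ne_bot
    have hsq : q - r = s := by
      have := degSieve_injective hne _ ((pullback_degSieve hne f q).symm.trans hRf)
      omega
    refine ⟨q, ?_, rfl⟩
    rw [apply_add_of_le hd hr, ← hsq] at hs
    calc (q : ℕ∞) ≤ r + (q - r : ℕ) := by exact_mod_cast (by omega : q ≤ r + (q - r))
      _ ≤ r + (d m - r) := add_le_add_right hs _
      _ = d m := add_tsub_cancel_of_le hr

lemma natCast_le_iff_degSieve_mem {J : GrothendieckTopology ℕ} {n : ℕ} {x : ℕ∞}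
    (hJ : ∀ T : Sieve (n : ℕ), T ∈ J (n : ℕ) ↔ ∃ r : ℕ, (r : ℕ∞) ≤ x ∧ T = degSieve hne n r)
    (r : ℕ) : (r : ℕ∞) ≤ x ↔ degSieve hne n r ∈ J (n : ℕ) := by
  refine ⟨fun hr => (hJ _).mpr ⟨r, hr, rfl⟩, fun hr => ?_⟩
  obtain ⟨r', hr', h⟩ := (hJ _).mp hr
  rwa [degSieve_injective hne n h]

lemma degSieve_mem_of_le (J : GrothendieckTopology ℕ) {m k r : ℕ} (hmk : m ≤ k)
    (h : degSieve hne m r ∈ J (m : ℕ)) : degSieve hne k (m + r - k) ∈ J (k : ℕ) := by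
  obtain ⟨f⟩ := (hne m k).mpr hmk
  simpa [pullback_degSieve] using J.pullback_stable f h

lemma degSieve_succ_mem_iff (J : GrothendieckTopology ℕ) {n r : ℕ}
    (h1 : degSieve hne n 1 ∈ J (n : ℕ)) :
    degSieve hne (n + 1) r ∈ J ((n + 1 : ℕ) : ℕ) ↔ degSieve hne n (r + 1) ∈ J (n : ℕ) := by
  refine ⟨fun h => J.transitive h1 _ fun j f (hj : n + 1 ≤ j) => ?_, fun h => ?_⟩
  · rw [pullback_degSieve]
    convert degSieve_mem_of_le hne J hj h using 2
    omega
  · convert degSieve_mem_of_le hne J n.le_succ h using 2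
    omega

noncomputable def depth (J : GrothendieckTopology ℕ) (n : ℕ) : ℕ∞ :=
  ⨆ (r : ℕ) (_ : degSieve hne n r ∈ J (n : ℕ)), (r : ℕ∞)

lemma natCast_le_depth_iff {J : GrothendieckTopology ℕ} {n r : ℕ} :
    (r : ℕ∞) ≤ depth hne J n ↔ degSieve hne n r ∈ J (n : ℕ) := by
  refine ⟨fun hr => ?_, fun hr => le_iSup₂ (f := fun r (_ : degSieve hne n r ∈ J (n : ℕ)) =>
    (r : ℕ∞)) r hr⟩
  cases r with
  | zero => simp [degSieve_zero]
  | succ r =>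
    push_cast at hr
    obtain ⟨q, hq⟩ := lt_iSup_iff.mp (ENat.natCast_add_one_le_iff.mp hr)
    obtain ⟨hqJ, hrq⟩ := lt_iSup_iff.mp hq
    exact J.superset_covering (degSieve_antitone hne n (by exact_mod_cast hrq)) hqJ

lemma depth_succ (J : GrothendieckTopology ℕ) (n : ℕ) (h0 : depth hne J n ≠ 0) :
    depth hne J (n + 1) = depth hne J n - 1 := by
  have h1 : 1 ≤ depth hne J n := Order.one_le_iff_ne_zero.mpr h0
  have hS1 : degSieve hne n 1 ∈ J (n : ℕ) := (natCast_le_depth_iff hne).mp (by simpa using h1)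
  refine ENat.eq_of_forall_natCast_le_iff fun r => ?_
  rw [natCast_le_depth_iff hne, degSieve_succ_mem_iff hne J hS1, ← natCast_le_depth_iff hne,
    (ENat.addLECancellable_of_ne_top ENat.one_ne_top).le_tsub_iff_right h1, Nat.cast_succ]

include htrans hgen in
lemma mem_iff_of_bot_notMem (J : GrothendieckTopology ℕ)
    (hJ : ∀ n : ℕ, (⊥ : Sieve (n : ℕ)) ∉ J (n : ℕ)) (n : ℕ) (T : Sieve (n : ℕ)) :
    T ∈ J (n : ℕ) ↔ ∃ r : ℕ, (r : ℕ∞) ≤ depth hne J n ∧ T = degSieve hne n r := by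
  refine ⟨fun hT => ?_, fun ⟨r, hr, hT⟩ => hT ▸ (natCast_le_depth_iff hne).mp hr⟩
  obtain ⟨r, rfl⟩ := eq_degSieve_of_ne_bot hne htrans hgen (ne_of_mem_of_not_mem hT (hJ n))
  exact ⟨r, (natCast_le_depth_iff hne).mpr hT, rfl⟩

end EICategory

theorem generic_topologies_classified_general [SmallCategory ℕ]
    (hne : ∀ m n : ℕ, Nonempty ((n : ℕ) ⟶ (m : ℕ)) ↔ m ≤ n)
    (htrans : ∀ (m n : ℕ) (f g : (n : ℕ) ⟶ (m : ℕ)), ∃ e : (n : ℕ) ⟶ (n : ℕ), e ≫ f = g)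
    (hgen : ∀ (m n : ℕ) (f : (n : ℕ) ⟶ (m : ℕ)), m < n →
      ∃ (g : (n : ℕ) ⟶ ((m + 1 : ℕ) : ℕ)) (h : ((m + 1 : ℕ) : ℕ) ⟶ (m : ℕ)), f = g ≫ h) :
    (∀ d : ℕ → ℕ∞, (∀ n : ℕ, d n ≠ 0 → d (n + 1) = d n - 1) →
      ∃ J : GrothendieckTopology ℕ, ∀ (n : ℕ) (T : Sieve (n : ℕ)),
        T ∈ J (n : ℕ) ↔ ∃ r : ℕ, (r : ℕ∞) ≤ d n ∧ T = degSieve hne n r) ∧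
    (∀ J : GrothendieckTopology ℕ, (∀ n : ℕ, (⊥ : Sieve (n : ℕ)) ∉ J (n : ℕ)) →
      ∃! d : ℕ → ℕ∞, (∀ n : ℕ, d n ≠ 0 → d (n + 1) = d n - 1) ∧
        ∀ (n : ℕ) (T : Sieve (n : ℕ)),
          T ∈ J (n : ℕ) ↔ ∃ r : ℕ, (r : ℕ∞) ≤ d n ∧ T = degSieve hne n r) := by
  refine ⟨fun d hd => ⟨degTopology hne htrans hgen hd, fun _ _ => Iff.rfl⟩, fun J hJ => ?_⟩
  refine ⟨depth hne J, ⟨depth_succ hne J, mem_iff_of_bot_notMem hne htrans hgen J hJ⟩, ?_⟩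
  rintro d ⟨-, hdJ⟩
  funext n
  exact ENat.eq_of_forall_natCast_le_iff fun r =>
    (natCast_le_iff_degSieve_mem hne (hdJ n) r).trans (natCast_le_depth_iff hne).symm

/-- Let `C` be an EI category of type ℕ.  For every function `d : ℕ → ℕ∞` such that
`d n ≠ 0` implies `d (n+1) = d n − 1`, the rule `J n = {S(n,r) : r ≤ d n}` is a
Grothendieck topology; moreover every Grothendieck topology none of whose values contains
the empty sieve (a *generic* topology) arises from a unique such function `d`. -/
theorem generic_topologies_classified [SmallCategory ℕ]
    (hne : ∀ m n : ℕ, Nonempty ((n : ℕ) ⟶ (m : ℕ)) ↔ m ≤ n)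
    (htrans : ∀ (m n : ℕ) (f g : (n : ℕ) ⟶ (m : ℕ)), ∃ e : (n : ℕ) ⟶ (n : ℕ), e ≫ f = g)
    (hgen : ∀ (m n : ℕ) (f : (n : ℕ) ⟶ (m : ℕ)), m < n →
      ∃ (g : (n : ℕ) ⟶ ((m + 1 : ℕ) : ℕ)) (h : ((m + 1 : ℕ) : ℕ) ⟶ (m : ℕ)), f = g ≫ h)
    (hEI : ∀ (n : ℕ) (f : (n : ℕ) ⟶ (n : ℕ)), IsIso f) :
    (∀ d : ℕ → ℕ∞, (∀ n : ℕ, d n ≠ 0 → d (n + 1) = d n - 1) →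
      ∃ J : GrothendieckTopology ℕ, ∀ (n : ℕ) (T : Sieve (n : ℕ)),
        T ∈ J (n : ℕ) ↔ ∃ r : ℕ, (r : ℕ∞) ≤ d n ∧ T = degSieve hne n r) ∧
    (∀ J : GrothendieckTopology ℕ, (∀ n : ℕ, (⊥ : Sieve (n : ℕ)) ∉ J (n : ℕ)) →
      ∃! d : ℕ → ℕ∞, (∀ n : ℕ, d n ≠ 0 → d (n + 1) = d n - 1) ∧
        ∀ (n : ℕ) (T : Sieve (n : ℕ)),
          T ∈ J (n : ℕ) ↔ ∃ r : ℕ, (r : ℕ∞) ≤ d n ∧ T = degSieve hne n r) :=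
  generic_topologies_classified_general hne htrans hgen
end
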